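/- arXiv:1808.03721 — 4 statements merged into one kernel-verified Lean document; each statement's English description precedes it below -/
import Mathlib

section
/- Let a, c, d, r be positive real constants. Then ω_{k+1}^+ − ω_k^+ → +∞ as k → +∞, and ω_{k+1}^+ − ω_k^+ → +∞ as k → −∞. -/
open Filter

/-- The eigenvalue exponent `ω_k^+` (formula (3.3)). -/
noncomputable def omegaP (a c d r : ℝ) (k : ℤ) : ℝ :=
  (1 / (2 * c)) * ((c + 1) * (k : ℝ) ^ 3 - r * (k : ℝ)
    + (k : ℝ) * Real.sqrt (4 * a * c * d * (k : ℝ) ^ 4 + ((c - 1) * (k : ℝ) ^ 2 + r) ^ 2))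

lemma sqrt_lb (a c d r x : ℝ) (ha : 0 < a) (hc : 0 < c) (hd : 0 < d) (hr : 0 < r) :
    Real.sqrt (4*a*c*d + (c-1)^2) * x^2 - |c - 1| * r / Real.sqrt (4*a*c*d + (c-1)^2)
      ≤ Real.sqrt (4*a*c*d*x^4 + ((c-1)*x^2+r)^2) := by
  set L := 4*a*c*d + (c-1)^2 with hL
  have hLpos : 0 < L := by positivity
  set s := Real.sqrt L with hs
  have hsL : s ^ 2 = L := Real.sq_sqrt hLpos.le
  have hspos : 0 < s := Real.sqrt_pos.mpr hLpos
  set m := |c - 1| * r/s with hm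
  have hmnn : 0 ≤ m := by positivity
  have hsm : s * m = |c - 1| * r := by rw [hm, mul_div_assoc']; exact mul_div_cancel_left₀ _ hspos.ne'
  have habs : (c-1) ≤ |c - 1| := le_abs_self _
  have habs2 : -(c-1) ≤ |c - 1| := neg_le_abs _
  have hsqab : |c - 1|^2 = (c-1)^2 := sq_abs _
  rcases le_or_gt (s*x^2 - m) 0 with h | h
  · exact h.trans (Real.sqrt_nonneg _)
  · rw [← Real.sqrt_sq h.le]
    apply Real.sqrt_le_sqrt
    -- (s x² − m)² = L x⁴ − 2|c−1|r x² + m² ≤ L x⁴ + 2(c−1)r x² + r²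
    have hm2 : L * m^2 = (c-1)^2 * r^2 := by
      have := congrArg (·^2) hsm
      have this : (s * m) ^ 2 = (|c - 1| * r) ^ 2 := this
      nlinarith [this]
    have hmr : m^2 ≤ r^2 := by
      nlinarith [hm2, hLpos, mul_nonneg (by positivity : (0:ℝ) ≤ 4*a*c*d) (sq_nonneg r)]
    have hs2 : s^2 * x^4 = 4*a*c*d*x^4 + (c-1)^2*x^4 := by rw [hsL, hL]; ring
    have hsmx : s * m * x^2 = |c - 1| * r * x^2 := by rw [hsm]
    nlinarith [hs2, hsmx, hmr,
      mul_nonneg (sq_nonneg x) (mul_nonneg hr.le (by linarith : (0:ℝ) ≤ (c-1) + |c - 1|))]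

lemma sqrt_ub (a c d r x : ℝ) (ha : 0 < a) (hc : 0 < c) (hd : 0 < d) (hr : 0 < r) :
    Real.sqrt (4*a*c*d*x^4 + ((c-1)*x^2+r)^2)
      ≤ Real.sqrt (4*a*c*d + (c-1)^2) * x^2 + (|c - 1| * r / Real.sqrt (4*a*c*d + (c-1)^2) + r) := by
  set L := 4*a*c*d + (c-1)^2 with hL
  have hLpos : 0 < L := by positivity
  set s := Real.sqrt L with hs
  have hsL : s ^ 2 = L := Real.sq_sqrt hLpos.le
  have hspos : 0 < s := Real.sqrt_pos.mpr hLpos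
  set m := |c - 1| * r/s with hm
  have hmnn : 0 ≤ m := by positivity
  have hsm : s * m = |c - 1| * r := by rw [hm, mul_div_assoc']; exact mul_div_cancel_left₀ _ hspos.ne'
  have habs : (c-1) ≤ |c - 1| := le_abs_self _
  have hrhs : 0 ≤ s * x^2 + (m + r) := by positivity
  rw [← Real.sqrt_sq hrhs]
  apply Real.sqrt_le_sqrt
  have hs2 : s^2 * x^4 = 4*a*c*d*x^4 + (c-1)^2*x^4 := by rw [hsL, hL]; ring
  have hsmx : s * m * x^2 = |c - 1| * r * x^2 := by rw [hsm]
  nlinarith [hs2, hsmx, sq_nonneg m, mul_nonneg hmnn hr.le,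
    mul_nonneg (sq_nonneg x) (mul_nonneg hspos.le hr.le),
    mul_nonneg (sq_nonneg x) (mul_nonneg hr.le (by linarith : (0:ℝ) ≤ |c - 1| - (c-1)))]

lemma omegaP_neg (a c d r : ℝ) (k : ℤ) : omegaP a c d r (-k) = - omegaP a c d r k := by
  unfold omegaP
  push_cast
  rw [show 4*a*c*d*(-(k:ℝ))^4 + ((c-1)*(-(k:ℝ))^2 + r)^2
      = 4*a*c*d*(k:ℝ)^4 + ((c-1)*(k:ℝ)^2 + r)^2 from by ring]
  ring

lemma gap_atTop (a c d r : ℝ) (ha : 0 < a) (hc : 0 < c) (hd : 0 < d) (hr : 0 < r) :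
    Tendsto (fun k : ℤ => omegaP a c d r (k + 1) - omegaP a c d r k) atTop atTop := by
  set L := 4*a*c*d + (c-1)^2 with hL
  have hLpos : 0 < L := by positivity
  set s := Real.sqrt L with hs
  have hsL : s ^ 2 = L := Real.sq_sqrt hLpos.le
  have hspos : 0 < s := Real.sqrt_pos.mpr hLpos
  set m := |c - 1| * r/s with hm
  have hmnn : 0 ≤ m := by positivity
  set B : ℝ := 2*c + 2*r + 3*m with hB
  refine tendsto_atTop_mono' atTop ?_ tendsto_intCast_atTop_atTop
  filter_upwards [eventually_ge_atTop (max 1 ⌈B⌉)] with k hk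
  have hk1 : (1:ℤ) ≤ k := le_trans (le_max_left _ _) hk
  have hx1 : (1:ℝ) ≤ (k:ℝ) := by exact_mod_cast hk1
  have hxB : B ≤ (k:ℝ) := by
    calc B ≤ (⌈B⌉ : ℝ) := Int.le_ceil B
    _ ≤ (k:ℝ) := by exact_mod_cast le_trans (le_max_right _ _) hk
  set x : ℝ := (k:ℝ) with hxdef
  have hS1 : s * (x+1)^2 - m ≤ Real.sqrt (4*a*c*d*(x+1)^4 + ((c-1)*(x+1)^2+r)^2) := by
    simpa [← hL, ← hs, ← hm] using sqrt_lb a c d r (x+1) ha hc hd hr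
  have hS0 : Real.sqrt (4*a*c*d*x^4 + ((c-1)*x^2+r)^2) ≤ s * x^2 + (m + r) := by
    simpa [← hL, ← hs, ← hm] using sqrt_ub a c d r x ha hc hd hr
  set S1 := Real.sqrt (4*a*c*d*(x+1)^4 + ((c-1)*(x+1)^2+r)^2) with hS1d
  set S0 := Real.sqrt (4*a*c*d*x^4 + ((c-1)*x^2+r)^2) with hS0d
  have hxpos : 0 < x := by linarith
  have hmul1 : (x+1) * (s*(x+1)^2 - m) ≤ (x+1) * S1 :=
    mul_le_mul_of_nonneg_left hS1 (by linarith)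
  have hmul0 : x * S0 ≤ x * (s*x^2 + (m+r)) :=
    mul_le_mul_of_nonneg_left hS0 hxpos.le
  have key : 2*c*x ≤ ((c+1)*(x+1)^3 - r*(x+1) + (x+1)*S1)
      - ((c+1)*x^3 - r*x + x*S0) := by
    nlinarith [hmul1, hmul0, mul_le_mul_of_nonneg_right hxB hxpos.le,
      mul_nonneg hspos.le (sq_nonneg x), mul_nonneg hspos.le hxpos.le, hmnn, hr.le, hc.le,
      mul_nonneg hmnn hxpos.le, mul_nonneg hr.le hxpos.le, mul_nonneg hc.le hxpos.le]
  show x ≤ omegaP a c d r (k+1) - omegaP a c d r k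
  unfold omegaP
  push_cast
  rw [← hxdef, ← hS1d, ← hS0d, ← mul_sub]
  calc x = (1/(2*c)) * (2*c*x) := by field_simp
  _ ≤ _ := mul_le_mul_of_nonneg_left key (by positivity)

/-- Lemma 3.4: for positive constants `a,c,d,r`, the gaps `ω_{k+1}^+ − ω_k^+`
tend to `+∞` as `k → +∞` and as `k → −∞`. -/
theorem omegaP_gap_tendsto (a c d r : ℝ) (ha : 0 < a) (hc : 0 < c) (hd : 0 < d)
    (hr : 0 < r) :
    Tendsto (fun k : ℤ => omegaP a c d r (k + 1) - omegaP a c d r k) atTop atTop ∧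
    Tendsto (fun k : ℤ => omegaP a c d r (k + 1) - omegaP a c d r k) atBot atTop := by
  have htop := gap_atTop a c d r ha hc hd hr
  refine ⟨htop, ?_⟩
  have hcomp : Tendsto (fun k : ℤ => -1 - k) atBot atTop := by
    have := tendsto_atTop_add_const_right atBot (-1 : ℤ) tendsto_neg_atBot_atTop
    exact this.congr (fun k => by ring)
  have := htop.comp hcomp
  refine this.congr (fun k => ?_)
  simp only [Function.comp]
  have h1 : (-1 - k + 1 : ℤ) = -k := by ring
  have h2 : (-1 - k : ℤ) = -(k+1) := by ring
  rw [h1, h2, omegaP_neg, omegaP_neg]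
  ring
end

section
/- For Lebesgue-almost every quadruple (a, c, d, r) ∈ (0,∞)⁴ the following holds: ω_k^+ ≠ ω_n^+ and ω_k^- ≠ ω_n^- for all integers k ≠ n. -/
open MeasureTheory

/-- The eigenvalue exponent `ω_k^-` (formula (3.3)). -/
noncomputable def omegaM (a c d r : ℝ) (k : ℤ) : ℝ :=
  (1 / (2 * c)) * ((c + 1) * (k : ℝ) ^ 3 - r * (k : ℝ)
    - (k : ℝ) * Real.sqrt (4 * a * c * d * (k : ℝ) ^ 4 + ((c - 1) * (k : ℝ) ^ 2 + r) ^ 2))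

lemma alg1 (C K N u v : ℝ) (h : C + K*u - N*v = 0) :
    (N^2*v^2 - K^2*u^2 + C^2)^2 - 4*C^2*N^2*v^2 = 0 := by
  linear_combination (-(N*v - C + K*u) * ((N^2*v^2 - K^2*u^2 + C^2) + 2*C*N*v)) * h

lemma alg2 (C K N u v : ℝ) (h : C - K*u + N*v = 0) :
    (N^2*v^2 - K^2*u^2 + C^2)^2 - 4*C^2*N^2*v^2 = 0 := by
  linear_combination ((N^2*v^2 - K^2*u^2 + C^2 - 2*C*N*v) * (N*v + C + K*u)) * h

open Polynomial in
lemma finite_quad {G : ℝ → ℝ} (A2 A1 A0 : ℝ)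
    (hG : ∀ x, G x = A2*x^2 + A1*x + A0) (h : A2 ≠ 0 ∨ A1 ≠ 0) :
    {x : ℝ | G x = 0}.Finite := by
  have hp : (C A2 * X^2 + C A1 * X + C A0 : ℝ[X]) ≠ 0 := by
    intro hzero
    rcases h with h | h
    · have := congrArg (fun q => Polynomial.coeff q 2) hzero
      simp at this; exact h this
    · have := congrArg (fun q => Polynomial.coeff q 1) hzero
      simp at this; exact h this
  refine (Polynomial.finite_setOf_isRoot hp).subset ?_
  intro x hx
  simp only [Set.mem_setOf_eq, IsRoot, eval_add, eval_mul, eval_pow, eval_C, eval_X]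
  rw [Set.mem_setOf_eq, hG] at hx; linarith [hx]

/-- the general case `N^6 ≠ K^6`, in terms of the inner (uncancelled) equality. -/
lemma slice_general (c d r K N : ℝ) (hc : 0 < c) (hd : 0 < d) (hr : 0 < r)
    (h6 : N^6 - K^6 ≠ 0) :
    {a : ℝ | 0 < a ∧
      ((c + 1) * K ^ 3 - r * K + K * Real.sqrt (4 * a * c * d * K ^ 4 + ((c - 1) * K ^ 2 + r) ^ 2)
        = (c + 1) * N ^ 3 - r * N + N * Real.sqrt (4 * a * c * d * N ^ 4 + ((c - 1) * N ^ 2 + r) ^ 2)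
      ∨ (c + 1) * K ^ 3 - r * K - K * Real.sqrt (4 * a * c * d * K ^ 4 + ((c - 1) * K ^ 2 + r) ^ 2)
        = (c + 1) * N ^ 3 - r * N - N * Real.sqrt (4 * a * c * d * N ^ 4 + ((c - 1) * N ^ 2 + r) ^ 2))}.Finite := by
  set Cc : ℝ := (c + 1) * (K^3 - N^3) - r * (K - N) with hCc
  refine (finite_quad (G := fun a =>
      (N^2*(4*a*c*d*N^4 + ((c - 1) * N ^ 2 + r) ^ 2)
        - K^2*(4*a*c*d*K^4 + ((c - 1) * K ^ 2 + r) ^ 2) + Cc^2)^2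
      - 4*Cc^2*N^2*(4*a*c*d*N^4 + ((c - 1) * N ^ 2 + r) ^ 2))
    ((4*c*d*(N^6-K^6))^2)
    (2*(4*c*d*(N^6-K^6))*(N^2*((c - 1) * N ^ 2 + r) ^ 2 - K^2*((c - 1) * K ^ 2 + r) ^ 2 + Cc^2)
      - 4*Cc^2*N^2*(4*c*d*N^4))
    ((N^2*((c - 1) * N ^ 2 + r) ^ 2 - K^2*((c - 1) * K ^ 2 + r) ^ 2 + Cc^2)^2
      - 4*Cc^2*N^2*((c - 1) * N ^ 2 + r) ^ 2)
    (fun x => by ring) (Or.inl (pow_ne_zero 2 (by positivity))) ).subset ?_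
  rintro a ⟨ha, heq⟩
  set u : ℝ := Real.sqrt (4 * a * c * d * K ^ 4 + ((c - 1) * K ^ 2 + r) ^ 2) with hudef
  set v : ℝ := Real.sqrt (4 * a * c * d * N ^ 4 + ((c - 1) * N ^ 2 + r) ^ 2) with hvdef
  have hu : u ^ 2 = 4 * a * c * d * K ^ 4 + ((c - 1) * K ^ 2 + r) ^ 2 :=
    Real.sq_sqrt (by positivity)
  have hv : v ^ 2 = 4 * a * c * d * N ^ 4 + ((c - 1) * N ^ 2 + r) ^ 2 :=
    Real.sq_sqrt (by positivity)
  have key : (N^2*v^2 - K^2*u^2 + Cc^2)^2 - 4*Cc^2*N^2*v^2 = 0 := by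
    rcases heq with h | h
    · exact alg1 Cc K N u v (by rw [hCc]; linear_combination h)
    · exact alg2 Cc K N u v (by rw [hCc]; linear_combination h)
  rw [hu, hv] at key
  simp only [Set.mem_setOf_eq]
  linear_combination key

/-- the case `N = -K`, `K ≠ 0`. -/
lemma slice_neg (c d r K : ℝ) (hc : 0 < c) (hd : 0 < d) (hr : 0 < r) (hK : K ≠ 0) :
    {a : ℝ | 0 < a ∧
      ((c + 1) * K ^ 3 - r * K + K * Real.sqrt (4 * a * c * d * K ^ 4 + ((c - 1) * K ^ 2 + r) ^ 2)
        = (c + 1) * (-K) ^ 3 - r * (-K) + (-K) * Real.sqrt (4 * a * c * d * (-K) ^ 4 + ((c - 1) * (-K) ^ 2 + r) ^ 2)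
      ∨ (c + 1) * K ^ 3 - r * K - K * Real.sqrt (4 * a * c * d * K ^ 4 + ((c - 1) * K ^ 2 + r) ^ 2)
        = (c + 1) * (-K) ^ 3 - r * (-K) - (-K) * Real.sqrt (4 * a * c * d * (-K) ^ 4 + ((c - 1) * (-K) ^ 2 + r) ^ 2))}.Finite := by
  refine (finite_quad (G := fun a =>
      4*a*c*d*K^4 + ((c - 1) * K ^ 2 + r) ^ 2 - (r - (c+1)*K^2)^2)
    0 (4*c*d*K^4) (((c - 1) * K ^ 2 + r) ^ 2 - (r - (c+1)*K^2)^2)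
    (fun x => by ring) (Or.inr (by positivity)) ).subset ?_
  rintro a ⟨ha, heq⟩
  have hargN : 4 * a * c * d * (-K) ^ 4 + ((c - 1) * (-K) ^ 2 + r) ^ 2
      = 4 * a * c * d * K ^ 4 + ((c - 1) * K ^ 2 + r) ^ 2 := by ring
  rw [hargN] at heq
  set u : ℝ := Real.sqrt (4 * a * c * d * K ^ 4 + ((c - 1) * K ^ 2 + r) ^ 2) with hudef
  have hu : u ^ 2 = 4 * a * c * d * K ^ 4 + ((c - 1) * K ^ 2 + r) ^ 2 :=
    Real.sq_sqrt (by positivity)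
  have h2K : (2 : ℝ) * K ≠ 0 := by simp [hK]
  simp only [Set.mem_setOf_eq]
  rcases heq with h | h
  · have hkey : (c+1)*K^2 - r + u = 0 := by
      apply mul_left_cancel₀ h2K
      rw [mul_zero]; linear_combination h
    linear_combination (u + r - (c+1)*K^2) * hkey - hu
  · have hkey : (c+1)*K^2 - r - u = 0 := by
      apply mul_left_cancel₀ h2K
      rw [mul_zero]; linear_combination h
    linear_combination (-(u + (c+1)*K^2 - r)) * hkey - hu

lemma slice_finite (k n : ℤ) (hkn : k ≠ n) (c d r : ℝ) (hc : 0 < c) (hd : 0 < d)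
    (hr : 0 < r) :
    {a : ℝ | 0 < a ∧ (omegaP a c d r k = omegaP a c d r n ∨
        omegaM a c d r k = omegaM a c d r n)}.Finite := by
  have h2c : (1 : ℝ) / (2 * c) ≠ 0 := by positivity
  by_cases hnk : n = -k
  · have hk0 : k ≠ 0 := by omega
    have hK0 : ((k : ℝ)) ≠ 0 := Int.cast_ne_zero.2 hk0
    have hNK : ((n : ℤ) : ℝ) = -((k : ℤ) : ℝ) := by rw [hnk]; push_cast; ring
    refine (slice_neg c d r (k : ℝ) hc hd hr hK0).subset ?_
    rintro a ⟨ha, heq⟩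
    refine ⟨ha, ?_⟩
    rcases heq with h | h
    · exact Or.inl (by rw [omegaP, omegaP, hNK] at h; exact mul_left_cancel₀ h2c h)
    · exact Or.inr (by rw [omegaM, omegaM, hNK] at h; exact mul_left_cancel₀ h2c h)
  · have hKN : ((k : ℝ)) ≠ ((n : ℝ)) := by exact_mod_cast fun h => hkn (by exact_mod_cast h)
    have hNK' : ((n : ℝ)) ≠ -((k : ℝ)) := by
      intro h
      apply hnk
      exact_mod_cast (by push_cast; linarith : ((n : ℤ) : ℝ) = ((-k : ℤ) : ℝ))
    have h6 : ((n : ℝ))^6 - ((k : ℝ))^6 ≠ 0 := by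
      intro h
      have hfac : (((n:ℝ))^2 - ((k:ℝ))^2) * (((n:ℝ))^4 + ((n:ℝ))^2*((k:ℝ))^2 + ((k:ℝ))^4) = 0 := by
        linear_combination h
      rcases mul_eq_zero.mp hfac with h2 | h4
      · have h2' : ((n:ℝ))^2 = ((k:ℝ))^2 := by linarith
        rcases sq_eq_sq_iff_eq_or_eq_neg.mp h2' with h' | h'
        · exact hKN h'.symm
        · exact hNK' h'
      · have hn4 : ((n:ℝ))^4 = 0 := by nlinarith [sq_nonneg ((n:ℝ)*(k:ℝ)), sq_nonneg ((n:ℝ)^2), sq_nonneg ((k:ℝ)^2)]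
        have hk4 : ((k:ℝ))^4 = 0 := by nlinarith [sq_nonneg ((n:ℝ)*(k:ℝ)), sq_nonneg ((n:ℝ)^2), sq_nonneg ((k:ℝ)^2)]
        have hn0 : ((n:ℝ)) = 0 := by
          have := pow_eq_zero_iff (n := 4) (by norm_num) |>.mp hn4; exact this
        have hk0 : ((k:ℝ)) = 0 := by
          have := pow_eq_zero_iff (n := 4) (by norm_num) |>.mp hk4; exact this
        exact hKN (by rw [hn0, hk0])
    refine (slice_general c d r (k : ℝ) (n : ℝ) hc hd hr h6).subset ?_
    rintro a ⟨ha, heq⟩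
    refine ⟨ha, ?_⟩
    rcases heq with h | h
    · exact Or.inl (by rw [omegaP, omegaP] at h; exact mul_left_cancel₀ h2c h)
    · exact Or.inr (by rw [omegaM, omegaM] at h; exact mul_left_cancel₀ h2c h)

lemma omegaP_measurable (k : ℤ) :
    Measurable fun p : ℝ × ℝ × ℝ × ℝ => omegaP p.1 p.2.1 p.2.2.1 p.2.2.2 k := by
  unfold omegaP
  fun_prop

lemma omegaM_measurable (k : ℤ) :
    Measurable fun p : ℝ × ℝ × ℝ × ℝ => omegaM p.1 p.2.1 p.2.2.1 p.2.2.2 k := by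
  unfold omegaM
  fun_prop

/-- Lemma 3.7: for (four-dimensional Lebesgue) almost every quadruple
`(a,c,d,r) ∈ (0,∞)⁴` one has `ω_k^+ ≠ ω_n^+` and `ω_k^- ≠ ω_n^-` whenever
`k ≠ n`. -/
theorem omega_injective_ae :
    ∀ᵐ p : ℝ × ℝ × ℝ × ℝ ∂(volume : Measure (ℝ × ℝ × ℝ × ℝ)),
      (0 < p.1 ∧ 0 < p.2.1 ∧ 0 < p.2.2.1 ∧ 0 < p.2.2.2) →
        ∀ k n : ℤ, k ≠ n →
          omegaP p.1 p.2.1 p.2.2.1 p.2.2.2 k ≠ omegaP p.1 p.2.1 p.2.2.1 p.2.2.2 n ∧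
          omegaM p.1 p.2.1 p.2.2.1 p.2.2.2 k ≠ omegaM p.1 p.2.1 p.2.2.1 p.2.2.2 n := by
  rw [MeasureTheory.ae_iff]
  set Bad : ℤ × ℤ → Set (ℝ × ℝ × ℝ × ℝ) := fun z =>
    {p | (0 < p.1 ∧ 0 < p.2.1 ∧ 0 < p.2.2.1 ∧ 0 < p.2.2.2) ∧ z.1 ≠ z.2 ∧
      (omegaP p.1 p.2.1 p.2.2.1 p.2.2.2 z.1 = omegaP p.1 p.2.1 p.2.2.1 p.2.2.2 z.2 ∨
       omegaM p.1 p.2.1 p.2.2.1 p.2.2.2 z.1 = omegaM p.1 p.2.1 p.2.2.1 p.2.2.2 z.2)} with hBad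
  have hsub : {p : ℝ × ℝ × ℝ × ℝ | ¬ ((0 < p.1 ∧ 0 < p.2.1 ∧ 0 < p.2.2.1 ∧ 0 < p.2.2.2) →
      ∀ k n : ℤ, k ≠ n →
        omegaP p.1 p.2.1 p.2.2.1 p.2.2.2 k ≠ omegaP p.1 p.2.1 p.2.2.1 p.2.2.2 n ∧
        omegaM p.1 p.2.1 p.2.2.1 p.2.2.2 k ≠ omegaM p.1 p.2.1 p.2.2.1 p.2.2.2 n)}
      ⊆ ⋃ z : ℤ × ℤ, Bad z := by
    intro p hp
    simp only [Set.mem_setOf_eq, not_forall] at hp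
    push_neg at hp
    obtain ⟨hpos, k, n, hkn, hor⟩ := hp
    refine Set.mem_iUnion.2 ⟨(k, n), hpos, hkn, ?_⟩
    by_cases hP : omegaP p.1 p.2.1 p.2.2.1 p.2.2.2 k = omegaP p.1 p.2.1 p.2.2.1 p.2.2.2 n
    · exact Or.inl hP
    · exact Or.inr (hor hP)
  refine measure_mono_null hsub (measure_iUnion_null fun z => ?_)
  obtain ⟨k, n⟩ := z
  by_cases hkn : k = n
  · have : Bad (k, n) = ∅ := by
      ext p; simp [hBad, hkn]
    rw [this]; exact measure_empty
  · have hmeas : MeasurableSet (Bad (k, n)) := by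
      apply MeasurableSet.inter
      · exact ((measurableSet_lt measurable_const measurable_fst).inter
          ((measurableSet_lt measurable_const (measurable_fst.comp measurable_snd)).inter
          ((measurableSet_lt measurable_const
            ((measurable_fst.comp measurable_snd).comp measurable_snd)).inter
          (measurableSet_lt measurable_const
            ((measurable_snd.comp measurable_snd).comp measurable_snd)))))
      · apply MeasurableSet.inter
        · exact MeasurableSet.const _
        · exact (measurableSet_eq_fun (omegaP_measurable k) (omegaP_measurable n)).union
            (measurableSet_eq_fun (omegaM_measurable k) (omegaM_measurable n))
    rw [show (volume : Measure (ℝ × ℝ × ℝ × ℝ)) = (volume : Measure ℝ).prod volume from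
      MeasureTheory.Measure.volume_eq_prod ℝ (ℝ × ℝ × ℝ),
      Measure.prod_apply_symm hmeas]
    have hz : ∀ y : ℝ × ℝ × ℝ, (volume ((fun x => (x, y)) ⁻¹' Bad (k, n))) = 0 := by
      intro y
      obtain ⟨c, d, r⟩ := y
      by_cases hcdr : 0 < c ∧ 0 < d ∧ 0 < r
      · obtain ⟨hc, hd, hr⟩ := hcdr
        refine measure_mono_null ?_
          ((slice_finite k n hkn c d r hc hd hr).measure_zero volume)
        rintro a ⟨⟨ha, _, _, _⟩, _, heq⟩
        exact ⟨ha, heq⟩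
      · refine measure_mono_null ?_ (measure_empty (μ := (volume : Measure ℝ)))
        rintro a ⟨⟨_, hc, hd, hr⟩, _⟩
        exact absurd ⟨hc, hd, hr⟩ hcdr
    calc ∫⁻ y, volume ((fun x => (x, y)) ⁻¹' Bad (k, n)) ∂volume
        = ∫⁻ _, 0 ∂(volume : Measure (ℝ × ℝ × ℝ)) := lintegral_congr hz
      _ = 0 := lintegral_zero
end

section
/- For Lebesgue-almost every quadruple (a, c, d, r) ∈ (0,∞)⁴ the following hold simultaneously: ω_k^+ ≠ ω_n^+ and ω_k^- ≠ ω_n^- for all integers k ≠ n, and ω_k^+ ≠ ω_n^- for all integers k, n except for k = n = 0 (where ω_0^+ = ω_0^- = 0). -/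
open MeasureTheory

/-! ### Auxiliary material -/

section Aux

set_option maxHeartbeats 2000000

lemma omegaP_zero' (a c d r : ℝ) : omegaP a c d r 0 = 0 := by simp [omegaP]
lemma omegaM_zero' (a c d r : ℝ) : omegaM a c d r 0 = 0 := by simp [omegaM]

open Polynomial in
/-- The zero set of a cubic with nonzero leading coefficient is finite. -/
lemma cubic_finite (b3 b2 b1 b0 : ℝ) (h3 : b3 ≠ 0) :
    {r : ℝ | b3*r^3 + b2*r^2 + b1*r + b0 = 0}.Finite := by
  have hp : (C b3 * X^3 + C b2 * X^2 + C b1 * X + C b0 : ℝ[X]) ≠ 0 := by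
    intro h
    have h2 := congrArg (fun q : ℝ[X] => q.coeff 3) h
    simp [coeff_C, coeff_X] at h2
    exact h3 h2
  refine (Polynomial.finite_setOf_isRoot hp).subset ?_
  intro r hr
  simp only [Set.mem_setOf_eq, IsRoot, eval_add, eval_mul, eval_pow, eval_C, eval_X]
  linarith [hr.out]

lemma finite_of_cubic {f : ℝ → ℝ} {b3 b2 b1 b0 : ℝ}
    (hf : ∀ r, f r = b3*r^3 + b2*r^2 + b1*r + b0) (h3 : b3 ≠ 0) :
    {r : ℝ | f r = 0}.Finite := by
  refine (cubic_finite b3 b2 b1 b0 h3).subset fun r hr => ?_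
  simp only [Set.mem_setOf_eq] at hr ⊢
  rw [← hf r]; exact hr

/-- Resultant-style polynomial (in `r`) whose roots contain all parameters where any
sign-combination equality `ω_k^± = ω_n^±` can hold. -/
noncomputable def Fq (a c d : ℝ) (k n : ℤ) (r : ℝ) : ℝ :=
  (((c + 1) * ((k:ℝ)^3 - (n:ℝ)^3) - r * ((k:ℝ) - (n:ℝ)))^2
      - (k:ℝ)^2 * (4 * a * c * d * (k:ℝ)^4 + ((c - 1) * (k:ℝ)^2 + r)^2)
      - (n:ℝ)^2 * (4 * a * c * d * (n:ℝ)^4 + ((c - 1) * (n:ℝ)^2 + r)^2))^2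
    - 4 * (k:ℝ)^2 * (n:ℝ)^2 * (4 * a * c * d * (k:ℝ)^4 + ((c - 1) * (k:ℝ)^2 + r)^2)
      * (4 * a * c * d * (n:ℝ)^4 + ((c - 1) * (n:ℝ)^2 + r)^2)

/-- `Fq` is a cubic in `r` (the quartic coefficient cancels). -/
lemma Fq_eq_cubic (a c d : ℝ) (k n : ℤ) (r : ℝ) :
    Fq a c d k n r =
      (16*c*(k:ℝ)*(n:ℝ)^5 - 16*c*(k:ℝ)^2*(n:ℝ)^4 - 16*c*(k:ℝ)^4*(n:ℝ)^2 + 16*c*(k:ℝ)^5*(n:ℝ)) * r^3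
    + (-32*c*(k:ℝ)*(n:ℝ)^7 + 16*c*(k:ℝ)^2*(n:ℝ)^6 - 16*c*(k:ℝ)^3*(n:ℝ)^5 + 64*c*(k:ℝ)^4*(n:ℝ)^4 - 16*c*(k:ℝ)^5*(n:ℝ)^3 + 16*c*(k:ℝ)^6*(n:ℝ)^2 - 32*c*(k:ℝ)^7*(n:ℝ) + 16*c^2*(n:ℝ)^8 - 16*c^2*(k:ℝ)*(n:ℝ)^7 - 16*c^2*(k:ℝ)^3*(n:ℝ)^5 + 32*c^2*(k:ℝ)^4*(n:ℝ)^4 - 16*c^2*(k:ℝ)^5*(n:ℝ)^3 - 16*c^2*(k:ℝ)^7*(n:ℝ) + 16*c^2*(k:ℝ)^8 + 16*a*c*d*(k:ℝ)*(n:ℝ)^7 - 16*a*c*d*(k:ℝ)^2*(n:ℝ)^6 - 16*a*c*d*(k:ℝ)^6*(n:ℝ)^2 + 16*a*c*d*(k:ℝ)^7*(n:ℝ)) * r^2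
    + (16*c*(k:ℝ)*(n:ℝ)^9 + 32*c*(k:ℝ)^3*(n:ℝ)^7 - 48*c*(k:ℝ)^4*(n:ℝ)^6 - 48*c*(k:ℝ)^6*(n:ℝ)^4 + 32*c*(k:ℝ)^7*(n:ℝ)^3 + 16*c*(k:ℝ)^9*(n:ℝ) - 32*c^2*(n:ℝ)^10 + 16*c^2*(k:ℝ)*(n:ℝ)^9 + 48*c^2*(k:ℝ)^3*(n:ℝ)^7 - 32*c^2*(k:ℝ)^4*(n:ℝ)^6 - 32*c^2*(k:ℝ)^6*(n:ℝ)^4 + 48*c^2*(k:ℝ)^7*(n:ℝ)^3 + 16*c^2*(k:ℝ)^9*(n:ℝ) - 32*c^2*(k:ℝ)^10 + 16*c^3*(k:ℝ)^3*(n:ℝ)^7 - 16*c^3*(k:ℝ)^4*(n:ℝ)^6 - 16*c^3*(k:ℝ)^6*(n:ℝ)^4 + 16*c^3*(k:ℝ)^7*(n:ℝ)^3 - 16*a*c*d*(k:ℝ)*(n:ℝ)^9 - 16*a*c*d*(k:ℝ)^3*(n:ℝ)^7 + 32*a*c*d*(k:ℝ)^4*(n:ℝ)^6 + 32*a*c*d*(k:ℝ)^6*(n:ℝ)^4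 - 16*a*c*d*(k:ℝ)^7*(n:ℝ)^3 - 16*a*c*d*(k:ℝ)^9*(n:ℝ) + 32*a*c^2*d*(n:ℝ)^10 - 16*a*c^2*d*(k:ℝ)*(n:ℝ)^9 - 16*a*c^2*d*(k:ℝ)^3*(n:ℝ)^7 - 16*a*c^2*d*(k:ℝ)^7*(n:ℝ)^3 - 16*a*c^2*d*(k:ℝ)^9*(n:ℝ) + 32*a*c^2*d*(k:ℝ)^10) * r
    + (-16*c*(k:ℝ)^3*(n:ℝ)^9 + 32*c*(k:ℝ)^6*(n:ℝ)^6 - 16*c*(k:ℝ)^9*(n:ℝ)^3 + 16*c^2*(n:ℝ)^12 - 32*c^2*(k:ℝ)^3*(n:ℝ)^9 + 32*c^2*(k:ℝ)^6*(n:ℝ)^6 - 32*c^2*(k:ℝ)^9*(n:ℝ)^3 + 16*c^2*(k:ℝ)^12 - 16*c^3*(k:ℝ)^3*(n:ℝ)^9 + 32*c^3*(k:ℝ)^6*(n:ℝ)^6 - 16*c^3*(k:ℝ)^9*(n:ℝ)^3 + 16*a*c*d*(k:ℝ)^3*(n:ℝ)^9 - 32*a*c*d*(k:ℝ)^6*(n:ℝ)^6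 + 16*a*c*d*(k:ℝ)^9*(n:ℝ)^3 - 32*a*c^2*d*(n:ℝ)^12 + 32*a*c^2*d*(k:ℝ)^3*(n:ℝ)^9 + 32*a*c^2*d*(k:ℝ)^9*(n:ℝ)^3 - 32*a*c^2*d*(k:ℝ)^12 + 16*a*c^3*d*(k:ℝ)^3*(n:ℝ)^9 - 32*a*c^3*d*(k:ℝ)^6*(n:ℝ)^6 + 16*a*c^3*d*(k:ℝ)^9*(n:ℝ)^3 + 16*a^2*c^2*d^2*(n:ℝ)^12 - 32*a^2*c^2*d^2*(k:ℝ)^6*(n:ℝ)^6 + 16*a^2*c^2*d^2*(k:ℝ)^12) := by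
  unfold Fq; ring

/-- The leading (cubic) coefficient of `Fq` is nonzero. -/
lemma Fq_lead_ne (c : ℝ) (hc : 0 < c) (k n : ℤ) (hk : k ≠ 0) (hn : n ≠ 0) (hkn : k ≠ n) :
    (16*c*(k:ℝ)*(n:ℝ)^5 - 16*c*(k:ℝ)^2*(n:ℝ)^4 - 16*c*(k:ℝ)^4*(n:ℝ)^2 + 16*c*(k:ℝ)^5*(n:ℝ)) ≠ 0 := by
  have h1 : ((k:ℝ) - n) ≠ 0 := sub_ne_zero_of_ne (by exact_mod_cast hkn)
  have hk' : ((k:ℝ)) ≠ 0 := Int.cast_ne_zero.2 hk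
  have hn' : ((n:ℝ)) ≠ 0 := Int.cast_ne_zero.2 hn
  have h2 : (0:ℝ) < (k:ℝ)^2 + (k:ℝ)*n + (n:ℝ)^2 := by
    nlinarith [sq_nonneg (2*(k:ℝ) + n), sq_nonneg ((n:ℝ)), sq_pos_of_ne_zero hn']
  have h3 : (16*c*(k:ℝ)*(n:ℝ)^5 - 16*c*(k:ℝ)^2*(n:ℝ)^4 - 16*c*(k:ℝ)^4*(n:ℝ)^2 + 16*c*(k:ℝ)^5*(n:ℝ))
      = 16*c*(k:ℝ)*(n:ℝ)*((k:ℝ)-n)^2*((k:ℝ)^2 + (k:ℝ)*n + (n:ℝ)^2) := by ring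
  rw [h3]
  positivity

/-- The root set of `Fq` is finite (for `0 < c`, `k ≠ 0`, `n ≠ 0`, `k ≠ n`). -/
lemma Fq_finite (a c d : ℝ) (hc : 0 < c) (k n : ℤ) (hk : k ≠ 0) (hn : n ≠ 0) (hkn : k ≠ n) :
    {r : ℝ | Fq a c d k n r = 0}.Finite :=
  finite_of_cubic (Fq_eq_cubic a c d k n) (Fq_lead_ne c hc k n hk hn hkn)

lemma alg' {K N u v R : ℝ} (h : K*u + N*v = R) :
    (R^2 - K^2*u^2 - N^2*v^2)^2 - 4*K^2*N^2*u^2*v^2 = 0 := by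
  linear_combination (-((R^2 - K^2*u^2 - N^2*v^2) + 2*K*N*u*v)*(R + K*u + N*v)) * h

/-- Any of the three relevant equalities of exponents forces `Fq` to vanish. -/
lemma eq_imp_Fq {a c d r : ℝ} (ha : 0 < a) (hc : 0 < c) (hd : 0 < d) (k n : ℤ)
    (h : omegaP a c d r k = omegaP a c d r n ∨ omegaM a c d r k = omegaM a c d r n ∨
         omegaP a c d r k = omegaM a c d r n) :
    Fq a c d k n r = 0 := by
  have hornk : (0:ℝ) ≤ 4 * a * c * d * (k:ℝ)^4 + ((c - 1) * (k:ℝ)^2 + r)^2 := by positivity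
  have hornn : (0:ℝ) ≤ 4 * a * c * d * (n:ℝ)^4 + ((c - 1) * (n:ℝ)^2 + r)^2 := by positivity
  set u := Real.sqrt (4 * a * c * d * (k:ℝ)^4 + ((c - 1) * (k:ℝ)^2 + r)^2) with hudef
  set v := Real.sqrt (4 * a * c * d * (n:ℝ)^4 + ((c - 1) * (n:ℝ)^2 + r)^2) with hvdef
  have hu : u^2 = 4 * a * c * d * (k:ℝ)^4 + ((c - 1) * (k:ℝ)^2 + r)^2 := Real.sq_sqrt hornk
  have hv : v^2 = 4 * a * c * d * (n:ℝ)^4 + ((c - 1) * (n:ℝ)^2 + r)^2 := Real.sq_sqrt hornn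
  have hc2 : (1 / (2*c)) ≠ 0 := by positivity
  have hFq : Fq a c d k n r =
      (((c + 1) * ((k:ℝ)^3 - (n:ℝ)^3) - r * ((k:ℝ) - (n:ℝ)))^2
        - (k:ℝ)^2 * u^2 - (n:ℝ)^2 * v^2)^2
      - 4 * (k:ℝ)^2 * (n:ℝ)^2 * u^2 * v^2 := by
    rw [Fq, hu, hv]
  rw [hFq]
  rcases h with h | h | h
  · rw [omegaP, omegaP] at h
    have h2 := mul_left_cancel₀ hc2 h
    have h3 : (k:ℝ)*u + (-(n:ℝ))*v =
        ((c + 1) * (n:ℝ)^3 - r*(n:ℝ)) - ((c + 1) * (k:ℝ)^3 - r*(k:ℝ)) := by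
      linear_combination h2
    linear_combination alg' h3
  · rw [omegaM, omegaM] at h
    have h2 := mul_left_cancel₀ hc2 h
    have h3 : (-(k:ℝ))*u + (n:ℝ)*v =
        ((c + 1) * (n:ℝ)^3 - r*(n:ℝ)) - ((c + 1) * (k:ℝ)^3 - r*(k:ℝ)) := by
      linear_combination h2
    linear_combination alg' h3
  · rw [omegaP, omegaM] at h
    have h2 := mul_left_cancel₀ hc2 h
    have h3 : (k:ℝ)*u + (n:ℝ)*v =
        ((c + 1) * (n:ℝ)^3 - r*(n:ℝ)) - ((c + 1) * (k:ℝ)^3 - r*(k:ℝ)) := by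
      linear_combination h2
    linear_combination alg' h3

/-- If `ω_m^± = 0` with `m ≠ 0` then `r` takes a unique value. -/
lemma eq_zero_imp {a c d r : ℝ} (ha : 0 < a) (hc : 0 < c) (hd : 0 < d) (m : ℤ) (hm : m ≠ 0)
    (h : omegaP a c d r m = 0 ∨ omegaM a c d r m = 0) : r = (m:ℝ)^2 * (1 - a*d) := by
  have horn : (0:ℝ) ≤ 4 * a * c * d * (m:ℝ)^4 + ((c - 1) * (m:ℝ)^2 + r)^2 := by positivity
  set u := Real.sqrt (4 * a * c * d * (m:ℝ)^4 + ((c - 1) * (m:ℝ)^2 + r)^2) with hudef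
  have hu : u^2 = 4 * a * c * d * (m:ℝ)^4 + ((c - 1) * (m:ℝ)^2 + r)^2 := Real.sq_sqrt horn
  have hc2 : (1 / (2*c)) ≠ 0 := by positivity
  have hm' : ((m:ℝ)) ≠ 0 := Int.cast_ne_zero.2 hm
  have h4 : 4*c*(m:ℝ)^4 * (r - (m:ℝ)^2*(1 - a*d)) = 0 := by
    rcases h with h | h
    · rw [omegaP] at h
      have h2 : (c + 1) * (m:ℝ)^3 - r*(m:ℝ) + (m:ℝ)*u = 0 :=
        (mul_eq_zero.1 h).resolve_left hc2
      linear_combination (-(m:ℝ)^2) * hu +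
        ((m:ℝ)*u - ((c + 1) * (m:ℝ)^3 - r*(m:ℝ))) * h2
    · rw [omegaM] at h
      have h2 : (c + 1) * (m:ℝ)^3 - r*(m:ℝ) - (m:ℝ)*u = 0 :=
        (mul_eq_zero.1 h).resolve_left hc2
      linear_combination (-(m:ℝ)^2) * hu +
        (-((m:ℝ)*u) - ((c + 1) * (m:ℝ)^3 - r*(m:ℝ))) * h2
  have hne : (4*c*(m:ℝ)^4) ≠ 0 := by positivity
  have := (mul_eq_zero.1 h4).resolve_left hne
  linarith

/-- `ω_k^+ = ω_k^-` is impossible for `k ≠ 0` and positive parameters. -/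
lemma ne_PM_self {a c d r : ℝ} (ha : 0 < a) (hc : 0 < c) (hd : 0 < d) (k : ℤ) (hk : k ≠ 0) :
    omegaP a c d r k ≠ omegaM a c d r k := by
  intro h
  rw [omegaP, omegaM] at h
  have hc2 : (1 / (2*c)) ≠ 0 := by positivity
  have h2 := mul_left_cancel₀ hc2 h
  have hk' : ((k:ℝ)) ≠ 0 := Int.cast_ne_zero.2 hk
  have hpos : (0:ℝ) < 4 * a * c * d * (k:ℝ)^4 + ((c - 1) * (k:ℝ)^2 + r)^2 := by positivity
  have hs : 0 < Real.sqrt (4 * a * c * d * (k:ℝ)^4 + ((c - 1) * (k:ℝ)^2 + r)^2) :=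
    Real.sqrt_pos.2 hpos
  have : (k:ℝ) * Real.sqrt (4 * a * c * d * (k:ℝ)^4 + ((c - 1) * (k:ℝ)^2 + r)^2) = 0 := by
    linarith
  rcases mul_eq_zero.1 this with h' | h'
  · exact hk' h'
  · exact (ne_of_gt hs) h'

/-- The bad set for a fixed pair `(k, n)`. -/
def badSet (k n : ℤ) : Set (ℝ × ℝ × ℝ × ℝ) :=
  {p | (0 < p.1 ∧ 0 < p.2.1 ∧ 0 < p.2.2.1 ∧ 0 < p.2.2.2) ∧
    ((k ≠ n ∧ (omegaP p.1 p.2.1 p.2.2.1 p.2.2.2 k = omegaP p.1 p.2.1 p.2.2.1 p.2.2.2 n ∨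
               omegaM p.1 p.2.1 p.2.2.1 p.2.2.2 k = omegaM p.1 p.2.1 p.2.2.1 p.2.2.2 n)) ∨
     (¬(k = 0 ∧ n = 0) ∧
        omegaP p.1 p.2.1 p.2.2.1 p.2.2.2 k = omegaM p.1 p.2.1 p.2.2.1 p.2.2.2 n))}

lemma measurable_omegaP (k : ℤ) :
    Measurable (fun p : ℝ × ℝ × ℝ × ℝ => omegaP p.1 p.2.1 p.2.2.1 p.2.2.2 k) := by
  unfold omegaP; fun_prop

lemma measurable_omegaM (k : ℤ) :
    Measurable (fun p : ℝ × ℝ × ℝ × ℝ => omegaM p.1 p.2.1 p.2.2.1 p.2.2.2 k) := by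
  unfold omegaM; fun_prop

lemma badSet_measurable (k n : ℤ) : MeasurableSet (badSet k n) := by
  unfold badSet
  simp only [Set.setOf_and, Set.setOf_or]
  refine MeasurableSet.inter
    ((measurableSet_lt measurable_const measurable_fst).inter
     ((measurableSet_lt measurable_const (measurable_fst.comp measurable_snd)).inter
      ((measurableSet_lt measurable_const
         (measurable_fst.comp (measurable_snd.comp measurable_snd))).inter
       (measurableSet_lt measurable_const
         (measurable_snd.comp (measurable_snd.comp measurable_snd)))))) ?_
  · refine MeasurableSet.union (MeasurableSet.inter (MeasurableSet.const _) ?_)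
      (MeasurableSet.inter (MeasurableSet.const _) ?_)
    · exact MeasurableSet.union
        (measurableSet_eq_fun (measurable_omegaP k) (measurable_omegaP n))
        (measurableSet_eq_fun (measurable_omegaM k) (measurable_omegaM n))
    · exact measurableSet_eq_fun (measurable_omegaP k) (measurable_omegaM n)

/-- Every `r`-slice of the bad set is null. -/
lemma badSet_slice_null (k n : ℤ) (a c d : ℝ) :
    volume {r : ℝ | (a, c, d, r) ∈ badSet k n} = 0 := by
  by_cases hpos : 0 < a ∧ 0 < c ∧ 0 < d
  · obtain ⟨ha, hc, hd⟩ := hpos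
    by_cases hk : k = 0
    · by_cases hn : n = 0
      · subst hk; subst hn
        refine measure_mono_null (t := ∅) (fun r hr => ?_) measure_empty
        obtain ⟨-, h | h⟩ := hr
        · exact absurd rfl h.1
        · exact absurd ⟨rfl, rfl⟩ h.1
      · -- k = 0, n ≠ 0 : slice is contained in a singleton
        subst hk
        refine measure_mono_null (t := {(n:ℝ)^2 * (1 - a*d)}) ?_ (measure_singleton _)
        rintro r ⟨-, h | h⟩
        · rcases h.2 with h' | h'
          · exact Set.mem_singleton_iff.2 (eq_zero_imp ha hc hd n hn
              (Or.inl ((omegaP_zero' a c d r) ▸ h'.symm)))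
          · exact Set.mem_singleton_iff.2 (eq_zero_imp ha hc hd n hn
              (Or.inr ((omegaM_zero' a c d r) ▸ h'.symm)))
        · exact Set.mem_singleton_iff.2 (eq_zero_imp ha hc hd n hn
            (Or.inr ((omegaP_zero' a c d r) ▸ h.2.symm)))
    · by_cases hn : n = 0
      · -- n = 0, k ≠ 0
        subst hn
        refine measure_mono_null (t := {(k:ℝ)^2 * (1 - a*d)}) ?_ (measure_singleton _)
        rintro r ⟨-, h | h⟩
        · rcases h.2 with h' | h'
          · exact Set.mem_singleton_iff.2 (eq_zero_imp ha hc hd k hk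
              (Or.inl ((omegaP_zero' a c d r) ▸ h')))
          · exact Set.mem_singleton_iff.2 (eq_zero_imp ha hc hd k hk
              (Or.inr ((omegaM_zero' a c d r) ▸ h')))
        · exact Set.mem_singleton_iff.2 (eq_zero_imp ha hc hd k hk
            (Or.inl ((omegaM_zero' a c d r) ▸ h.2)))
      · by_cases hkn : k = n
        · subst hkn
          refine measure_mono_null (t := ∅) (fun r hr => ?_) measure_empty
          obtain ⟨-, h | h⟩ := hr
          · exact absurd rfl h.1
          · exact absurd h.2 (ne_PM_self ha hc hd k hk)
        · -- generic case: contained in the finite root set of `Fq`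
          refine measure_mono_null (t := {r : ℝ | Fq a c d k n r = 0}) ?_
            ((Fq_finite a c d hc k n hk hn hkn).measure_zero _)
          rintro r ⟨-, h | h⟩
          · rcases h.2 with h' | h'
            · exact eq_imp_Fq ha hc hd k n (Or.inl h')
            · exact eq_imp_Fq ha hc hd k n (Or.inr (Or.inl h'))
          · exact eq_imp_Fq ha hc hd k n (Or.inr (Or.inr h.2))
  · refine measure_mono_null (t := ∅) (fun r hr => ?_) measure_empty
    obtain ⟨⟨ha, hc, hd, -⟩, -⟩ := hr
    exact absurd ⟨ha, hc, hd⟩ hpos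

/-- A measurable subset of `ℝ⁴` all of whose innermost slices are null is null. -/
lemma null_of_slices {E : Set (ℝ × ℝ × ℝ × ℝ)} (hE : MeasurableSet E)
    (h : ∀ a c d : ℝ, volume {r : ℝ | (a, c, d, r) ∈ E} = 0) : volume E = 0 := by
  rw [Measure.volume_eq_prod _ _, Measure.measure_prod_null hE]
  refine Filter.Eventually.of_forall (fun a => ?_)
  have hEa : MeasurableSet (Prod.mk a ⁻¹' E) := hE.preimage measurable_prodMk_left
  show volume (Prod.mk a ⁻¹' E) = 0
  rw [Measure.volume_eq_prod _ _, Measure.measure_prod_null hEa]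
  refine Filter.Eventually.of_forall (fun c => ?_)
  have hEc : MeasurableSet (Prod.mk c ⁻¹' (Prod.mk a ⁻¹' E)) :=
    hEa.preimage measurable_prodMk_left
  show volume (Prod.mk c ⁻¹' (Prod.mk a ⁻¹' E)) = 0
  rw [Measure.volume_eq_prod _ _, Measure.measure_prod_null hEc]
  refine Filter.Eventually.of_forall (fun d => ?_)
  show volume (Prod.mk d ⁻¹' (Prod.mk c ⁻¹' (Prod.mk a ⁻¹' E))) = 0
  convert h a c d using 2
  rfl

lemma badSet_null (k n : ℤ) : volume (badSet k n) = 0 :=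
  null_of_slices (badSet_measurable k n) (badSet_slice_null k n)

end Aux

/-- Lemma 6.1 (ii): for (four-dimensional Lebesgue) almost every quadruple
`(a,c,d,r) ∈ (0,∞)⁴` one has simultaneously `ω_k^+ ≠ ω_n^+` and `ω_k^- ≠ ω_n^-`
whenever `k ≠ n`, and `ω_k^+ ≠ ω_n^-` for all integers `k, n` except
`k = n = 0` (where `ω_0^+ = ω_0^- = 0`). -/
theorem omega_all_distinct_ae :
    ∀ᵐ p : ℝ × ℝ × ℝ × ℝ ∂(volume : Measure (ℝ × ℝ × ℝ × ℝ)),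
      (0 < p.1 ∧ 0 < p.2.1 ∧ 0 < p.2.2.1 ∧ 0 < p.2.2.2) →
        (∀ k n : ℤ, k ≠ n →
          omegaP p.1 p.2.1 p.2.2.1 p.2.2.2 k ≠ omegaP p.1 p.2.1 p.2.2.1 p.2.2.2 n ∧
          omegaM p.1 p.2.1 p.2.2.1 p.2.2.2 k ≠ omegaM p.1 p.2.1 p.2.2.1 p.2.2.2 n) ∧
        (∀ k n : ℤ, ¬(k = 0 ∧ n = 0) →
          omegaP p.1 p.2.1 p.2.2.1 p.2.2.2 k ≠ omegaM p.1 p.2.1 p.2.2.1 p.2.2.2 n) ∧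
        omegaP p.1 p.2.1 p.2.2.1 p.2.2.2 0 = 0 ∧
        omegaM p.1 p.2.1 p.2.2.1 p.2.2.2 0 = 0 := by
  have hae : ∀ᵐ p : ℝ × ℝ × ℝ × ℝ ∂volume, ∀ k n : ℤ, p ∉ badSet k n :=
    ae_all_iff.2 fun k => ae_all_iff.2 fun n =>
      (measure_eq_zero_iff_ae_notMem).1 (badSet_null k n)
  filter_upwards [hae] with p hp hpos
  refine ⟨?_, ?_, omegaP_zero' _ _ _ _, omegaM_zero' _ _ _ _⟩
  · intro k n hkn
    constructor
    · intro heq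
      exact hp k n ⟨hpos, Or.inl ⟨hkn, Or.inl heq⟩⟩
    · intro heq
      exact hp k n ⟨hpos, Or.inl ⟨hkn, Or.inr heq⟩⟩
  · intro k n h heq
    exact hp k n ⟨hpos, Or.inr ⟨h, heq⟩⟩
end

section
/- Let a, c, d, r be positive real constants such that ω_k^+ ≠ ω_n^+ and ω_k^- ≠ ω_n^- whenever k ≠ n, and ω_k^+ ≠ ω_n^- for all integers k, n except k = n = 0. Then there exists ε > 0 such that the set Ω := {ω_k^+ : k ∈ ℤ} ∪ {ω_k^- : k ∈ ℤ} contains no three pairwise distinct elements x < y < z with y − x < ε and z − y < ε; i.e., every ε-chain in Ω has at most two elements. -/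
set_option maxHeartbeats 2000000

lemma sep_lemma (g : ℤ → ℝ) (hinj : Function.Injective g)
    (hodd : ∀ k : ℤ, g (-k) = - g k)
    (K : ℤ) (hK1 : 1 ≤ K) (δ : ℝ) (hδ : 0 < δ)
    (hgap : ∀ k : ℤ, K ≤ k → g k + δ ≤ g (k + 1)) :
    ∃ δ' : ℝ, 0 < δ' ∧ ∀ k n : ℤ, k ≠ n → δ' ≤ |g k - g n| := by
  have tel : ∀ k n : ℤ, K ≤ k → k < n → g k + δ ≤ g n := by
    intro k n hk hkn
    have H := Int.le_induction (motive := fun m _ => g k + δ ≤ g m) (m := k + 1)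
      (hgap k hk) (fun p hp (ih : g k + δ ≤ g p) => by have h2 := hgap p (by omega); show g k + δ ≤ g (p + 1); linarith)
    exact H n (by omega)
  have mono : ∀ k n : ℤ, K ≤ k → k ≤ n → g k ≤ g n := by
    intro k n hk hkn
    rcases eq_or_lt_of_le hkn with h | h
    · rw [h]
    · linarith [tel k n hk h]
  have telm : ∀ m : ℕ, g K + (m : ℝ) * δ ≤ g (K + (m : ℤ)) := by
    intro m
    induction m with
    | zero => simp
    | succ m ih =>
      have h1 := hgap (K + (m : ℤ)) (by omega)
      have h2 : (K + ((m : ℕ) + 1 : ℤ)) = (K + (m : ℤ)) + 1 := by ring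
      push_cast
      rw [show K + ((m : ℤ) + 1) = (K + (m : ℤ)) + 1 by ring]
      push_cast at ih
      linarith
  have hIne : (Finset.Icc (-K) K).Nonempty := ⟨0, by simp; omega⟩
  set B : ℝ := (Finset.Icc (-K) K).sup' hIne (fun j => |g j|) with hB
  have hBmem : ∀ j : ℤ, -K ≤ j → j ≤ K → |g j| ≤ B := by
    intro j h1 h2
    exact Finset.le_sup' (fun j => |g j|) (by simp [Finset.mem_Icc]; omega)
  have hB0 : 0 ≤ B := le_trans (abs_nonneg (g 0)) (hBmem 0 (by omega) (by omega))
  obtain ⟨m, hm⟩ := Archimedean.arch (B - g K) hδ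
  rw [nsmul_eq_mul] at hm
  set K' : ℤ := K + (m : ℤ) with hK'
  have hKK' : K ≤ K' := by omega
  have hK'1 : 1 ≤ K' := by omega
  have hgK' : B ≤ g K' := by
    have := telm m
    linarith
  have hub : ∀ j : ℤ, -K' ≤ j → j ≤ K' → g j ≤ g K' := by
    intro j h1 h2
    rcases le_or_gt K j with h | h
    · exact mono j K' h h2
    · rcases le_or_gt (-K) j with h3 | h3
      · exact le_trans (le_trans (le_abs_self _) (hBmem j h3 (by omega))) hgK'
      · have h4 : K ≤ -j := by omega
        have h5 : g K ≤ g (-j) := mono K (-j) le_rfl h4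
        have h6 : g j = - g (-j) := by rw [hodd j, neg_neg]
        have h7 : |g K| ≤ B := hBmem K (by omega) le_rfl
        have := abs_le.mp h7
        linarith
  have hlb : ∀ j : ℤ, -K' ≤ j → j ≤ K' → -g K' ≤ g j := by
    intro j h1 h2
    have h3 : g (-j) ≤ g K' := hub (-j) (by omega) (by omega)
    have h4 : g (-j) = - g j := hodd j
    linarith
  -- finite pair minimum
  set P : Finset (ℤ × ℤ) :=
    (Finset.Icc (-K') K' ×ˢ Finset.Icc (-K') K').filter (fun p => p.1 < p.2) with hPdef
  have hPne : P.Nonempty := by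
    refine ⟨(0, 1), ?_⟩
    simp [hPdef, Finset.mem_Icc]
    omega
  set δ₁ : ℝ := P.inf' hPne (fun p : ℤ × ℤ => |g p.1 - g p.2|) with hδ₁
  have hδ₁pos : 0 < δ₁ := by
    rw [hδ₁, Finset.lt_inf'_iff]
    intro p hp
    have hne : p.1 ≠ p.2 := ne_of_lt (Finset.mem_filter.mp hp).2
    exact abs_pos.mpr (sub_ne_zero.mpr (fun h => hne (hinj h)))
  have hδ₁le : ∀ k n : ℤ, -K' ≤ k → k ≤ K' → -K' ≤ n → n ≤ K' → k < n →
      δ₁ ≤ |g k - g n| := by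
    intro k n h1 h2 h3 h4 h5
    rw [hδ₁]
    refine Finset.inf'_le (b := (k, n)) _ ?_
    simp [hPdef, Finset.mem_Icc]
    exact ⟨⟨⟨h1, h2⟩, h3, h4⟩, h5⟩
  refine ⟨min δ δ₁, lt_min hδ hδ₁pos, ?_⟩
  have key : ∀ k n : ℤ, k < n → min δ δ₁ ≤ |g k - g n| := by
    intro k n hlt
    have habs : ∀ u v : ℝ, u + δ ≤ v → min δ δ₁ ≤ |u - v| := by
      intro u v h
      rw [abs_sub_comm, abs_of_nonneg (by linarith)]
      have := min_le_left δ δ₁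
      linarith
    rcases le_or_gt K k with hA | hA
    · exact habs _ _ (tel k n hA hlt)
    rcases le_or_gt n (-K) with hB | hB
    · have h1 := tel (-n) (-k) (by omega) (by omega)
      rw [hodd n, hodd k] at h1
      exact habs _ _ (by linarith)
    rcases le_or_gt k (-K' - 1) with hC | hC
    · -- k < -K'
      have h1 := tel K' (-k) hKK' (by omega)
      have h2 : g k = - g (-k) := by rw [hodd k, neg_neg]
      rcases le_or_gt n K' with hD | hD
      · have h3 := hlb n (by omega) hD
        exact habs _ _ (by linarith)
      · have h4 := tel K' n hKK' hD
        exact habs _ _ (by linarith)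
    · -- -K' ≤ k
      rcases le_or_gt n K' with hD | hD
      · have := hδ₁le k n (by omega) (by omega) (by omega) hD hlt
        exact le_trans (min_le_right δ δ₁) this
      · have h4 := tel K' n hKK' hD
        have h5 := hub k (by omega) (by omega)
        exact habs _ _ (by linarith)
  intro k n hkn
  rcases lt_or_gt_of_ne hkn with h | h
  · exact key k n h
  · rw [abs_sub_comm]; exact key n k h


noncomputable def omegaG (a c d r ρ : ℝ) (k : ℤ) : ℝ :=
  (1 / (2 * c)) * ((c + 1) * (k : ℝ) ^ 3 - r * (k : ℝ)
    + ρ * ((k : ℝ) * Real.sqrt (4 * a * c * d * (k : ℝ) ^ 4 + ((c - 1) * (k : ℝ) ^ 2 + r) ^ 2)))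

lemma omegaG_gap (a c d r : ℝ) (ha : 0 < a) (hc : 0 < c) (hd : 0 < d) (hr : 0 < r)
    (ρ : ℝ) (hρ : ρ = 1 ∨ ρ = -1) :
    ∃ (K : ℤ) (δ : ℝ), 1 ≤ K ∧ 0 < δ ∧
      ((∀ k : ℤ, K ≤ k → omegaG a c d r ρ k + δ ≤ omegaG a c d r ρ (k + 1)) ∨
       (∀ k : ℤ, K ≤ k → omegaG a c d r ρ (k + 1) + δ ≤ omegaG a c d r ρ k)) := by
  obtain ⟨W, hWdef⟩ : ∃ W : ℝ → ℝ,
      ∀ y, W y = Real.sqrt (4 * a * c * d * y ^ 4 + ((c - 1) * y ^ 2 + r) ^ 2) :=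
    ⟨_, fun y => rfl⟩
  have hWnn : ∀ y : ℝ, 0 ≤ W y := by intro y; rw [hWdef]; exact Real.sqrt_nonneg _
  have hW2 : ∀ y : ℝ, (W y) ^ 2 = 4 * a * c * d * y ^ 4 + ((c - 1) * y ^ 2 + r) ^ 2 := by
    intro y; rw [hWdef]; exact Real.sq_sqrt (by positivity)
  obtain ⟨s, hs0, hs2⟩ : ∃ s : ℝ, 0 < s ∧ s ^ 2 = (c - 1) ^ 2 + 4 * a * c * d :=
    ⟨Real.sqrt ((c - 1) ^ 2 + 4 * a * c * d), Real.sqrt_pos.mpr (by positivity),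
      Real.sq_sqrt (by positivity)⟩
  obtain ⟨b, hb0, hb1, hb2⟩ : ∃ b : ℝ, 0 ≤ b ∧ c - 1 ≤ b ∧ -b ≤ c - 1 :=
    ⟨|c - 1|, abs_nonneg _, le_abs_self _, neg_abs_le _⟩
  obtain ⟨E, hE0, hsE⟩ : ∃ E : ℝ, 0 ≤ E ∧ s * E = 2 * b * r + r ^ 2 :=
    ⟨(2 * b * r + r ^ 2) / s, by positivity, by field_simp⟩
  have hsq : ∀ y : ℝ, (W y - s * y ^ 2) * (W y + s * y ^ 2)
      = 2 * (c - 1) * r * y ^ 2 + r ^ 2 := by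
    intro y
    linear_combination hW2 y - y ^ 4 * hs2
  have hy2 : ∀ y : ℝ, 1 ≤ y → 1 ≤ y ^ 2 := by intro y hy; nlinarith
  have hpos : ∀ y : ℝ, 1 ≤ y → 0 < W y + s * y ^ 2 := by
    intro y hy
    have := hWnn y
    nlinarith [mul_pos hs0 (show (0:ℝ) < y ^ 2 by nlinarith)]
  have l3 : ∀ y : ℝ, 1 ≤ y → E * (s * y ^ 2) ≤ E * (W y + s * y ^ 2) := by
    intro y hy
    exact mul_le_mul_of_nonneg_left (by linarith [hWnn y]) hE0
  have l4 : ∀ y : ℝ, E * (s * y ^ 2) = (2 * b * r + r ^ 2) * y ^ 2 := by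
    intro y; linear_combination y ^ 2 * hsE
  have eUp : ∀ y : ℝ, 1 ≤ y → W y - s * y ^ 2 ≤ E := by
    intro y hy
    by_contra h
    push_neg at h
    have u1 : E * (W y + s * y ^ 2) < (W y - s * y ^ 2) * (W y + s * y ^ 2) :=
      mul_lt_mul_of_pos_right h (hpos y hy)
    have u4 : 0 ≤ (b - (c - 1)) * r * y ^ 2 :=
      mul_nonneg (mul_nonneg (by linarith) hr.le) (sq_nonneg y)
    have u5 : 0 ≤ r ^ 2 * (y ^ 2 - 1) :=
      mul_nonneg (sq_nonneg r) (by linarith [hy2 y hy])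
    have u6 : 0 < r ^ 2 := by positivity
    linarith [hsq y, l3 y hy, l4 y]
  have eLo : ∀ y : ℝ, 1 ≤ y → -E ≤ W y - s * y ^ 2 := by
    intro y hy
    by_contra h
    push_neg at h
    have u1 : E * (W y + s * y ^ 2) < (s * y ^ 2 - W y) * (W y + s * y ^ 2) :=
      mul_lt_mul_of_pos_right (by linarith) (hpos y hy)
    have u2 : (s * y ^ 2 - W y) * (W y + s * y ^ 2) = -(2 * (c - 1) * r * y ^ 2 + r ^ 2) := by
      linear_combination -(hsq y)
    have u4 : 0 ≤ (b + (c - 1)) * r * y ^ 2 :=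
      mul_nonneg (mul_nonneg (by linarith) hr.le) (sq_nonneg y)
    have u5 : 0 ≤ r ^ 2 * (y ^ 2 - 1) :=
      mul_nonneg (sq_nonneg r) (by linarith [hy2 y hy])
    have u6 : 0 < r ^ 2 := by positivity
    linarith [l3 y hy, l4 y]
  obtain ⟨C2, hC20, hsC2⟩ : ∃ C2 : ℝ, 0 ≤ C2 ∧ s * C2 = b * r * E + s * r ^ 2 :=
    ⟨(b * r * E + s * r ^ 2) / s, by positivity, by field_simp⟩
  obtain ⟨Q, hQdef⟩ : ∃ Q : ℝ → ℝ,
      ∀ y, Q y = s * y ^ 2 * (W y) - s ^ 2 * y ^ 4 - (c - 1) * r * y ^ 2 :=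
    ⟨_, fun y => rfl⟩
  have hq : ∀ y : ℝ, s * y ^ 2 * (W y) = s ^ 2 * y ^ 4 + (c - 1) * r * y ^ 2 + Q y := by
    intro y; rw [hQdef]; ring
  have hQprod : ∀ y : ℝ, (Q y) * (W y + s * y ^ 2)
      = y ^ 2 * ((c - 1) * r * (s * y ^ 2 - W y) + s * r ^ 2) := by
    intro y
    rw [hQdef]
    linear_combination (s * y ^ 2) * hsq y
  have hQbound : ∀ y : ℝ, 1 ≤ y → |Q y| ≤ C2 := by
    intro y hy
    have habs : |s * y ^ 2 - W y| ≤ E := by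
      rw [abs_sub_comm]
      exact abs_le.mpr ⟨eLo y hy, eUp y hy⟩
    have h1 : |Q y| * (s * y ^ 2) ≤ |Q y| * (W y + s * y ^ 2) :=
      mul_le_mul_of_nonneg_left (by linarith [hWnn y]) (abs_nonneg _)
    have h2 : |Q y| * (W y + s * y ^ 2) = |Q y * (W y + s * y ^ 2)| := by
      rw [abs_mul, abs_of_nonneg (le_of_lt (hpos y hy))]
    have h3 : |Q y * (W y + s * y ^ 2)| = y ^ 2 * |(c - 1) * r * (s * y ^ 2 - W y) + s * r ^ 2| := by
      rw [hQprod y, abs_mul, abs_of_nonneg (sq_nonneg y)]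
    have h4 : |(c - 1) * r * (s * y ^ 2 - W y) + s * r ^ 2| ≤ b * r * E + s * r ^ 2 := by
      refine le_trans (abs_add_le _ _) ?_
      have h5 : |(c - 1) * r * (s * y ^ 2 - W y)| = |c - 1| * r * |s * y ^ 2 - W y| := by
        rw [abs_mul, abs_mul, abs_of_nonneg hr.le]
      have h6 : |s * r ^ 2| = s * r ^ 2 := abs_of_nonneg (by positivity)
      have hcb : |c - 1| ≤ b := by
        rw [abs_le]; exact ⟨by linarith, hb1⟩
      have h7 : |c - 1| * r * |s * y ^ 2 - W y| ≤ b * r * E := by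
        have w1 : 0 ≤ (b - |c - 1|) * r * |s * y ^ 2 - W y| :=
          mul_nonneg (mul_nonneg (by linarith) hr.le) (abs_nonneg _)
        have w2 : 0 ≤ b * r * (E - |s * y ^ 2 - W y|) :=
          mul_nonneg (mul_nonneg hb0 hr.le) (by linarith)
        nlinarith [w1, w2]
      rw [h5, h6]
      linarith
    have h8 : y ^ 2 * (b * r * E + s * r ^ 2) = C2 * (s * y ^ 2) := by
      linear_combination (-y ^ 2) * hsC2
    have h9 : |Q y| * (s * y ^ 2) ≤ C2 * (s * y ^ 2) := by
      have h10 : y ^ 2 * |(c - 1) * r * (s * y ^ 2 - W y) + s * r ^ 2|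
          ≤ y ^ 2 * (b * r * E + s * r ^ 2) :=
        mul_le_mul_of_nonneg_left h4 (sq_nonneg y)
      rw [h8] at h10
      calc |Q y| * (s * y ^ 2) ≤ |Q y| * (W y + s * y ^ 2) := h1
        _ = |Q y * (W y + s * y ^ 2)| := h2
        _ = y ^ 2 * |(c - 1) * r * (s * y ^ 2 - W y) + s * r ^ 2| := h3
        _ ≤ C2 * (s * y ^ 2) := h10
    have hsy : 0 < s * y ^ 2 := mul_pos hs0 (by nlinarith [hy2 y hy])
    exact le_of_mul_le_mul_right h9 hsy
  have hρE : ∀ y : ℝ, 1 ≤ y → -E ≤ ρ * (W y - s * y ^ 2) ∧ ρ * (W y - s * y ^ 2) ≤ E := by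
    intro y hy
    have h1 := eLo y hy
    have h2 := eUp y hy
    rcases hρ with h | h
    · rw [h]; constructor <;> linarith
    · rw [h]; constructor <;> linarith
  have hGv : ∀ k : ℤ, omegaG a c d r ρ k
      = (1 / (2 * c)) * ((c + 1) * (k : ℝ) ^ 3 - r * (k : ℝ) + ρ * ((k : ℝ) * W (k : ℝ))) := by
    intro k
    rw [omegaG, hWdef]
  have h2cpos : (0:ℝ) < 1 / (2 * c) := by positivity
  rcases lt_trichotomy (c + 1 + ρ * s) 0 with ht | ht | ht
  · -- decreasing case
    have rawD : ∀ x : ℝ, 1 ≤ x → 1 + r + 3 * E ≤ 3 * (-(c + 1 + ρ * s)) * x →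
        ((c + 1) * (x + 1) ^ 3 - r * (x + 1) + ρ * ((x + 1) * W (x + 1))) + 1
          ≤ (c + 1) * x ^ 3 - r * x + ρ * (x * W x) := by
      intro x hx1 hcond
      obtain ⟨e1lo, e1up⟩ := hρE (x + 1) (by linarith)
      obtain ⟨e0lo, e0up⟩ := hρE x hx1
      have p1 : (x + 1) * (ρ * (W (x + 1) - s * (x + 1) ^ 2)) ≤ (x + 1) * E :=
        mul_le_mul_of_nonneg_left e1up (by linarith)
      have p2 : x * (-E) ≤ x * (ρ * (W x - s * x ^ 2)) :=
        mul_le_mul_of_nonneg_left e0lo (by linarith)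
      have p3 : (c + 1 + ρ * s) * (3 * x + 1) ≤ 0 :=
        mul_nonpos_of_nonpos_of_nonneg ht.le (by linarith)
      have p4 : (1 + r + 3 * E) * x ≤ (3 * (-(c + 1 + ρ * s)) * x) * x :=
        mul_le_mul_of_nonneg_right hcond (by linarith)
      have p5 : r * 1 ≤ r * x := mul_le_mul_of_nonneg_left hx1 hr.le
      have p6 : E * 1 ≤ E * x := mul_le_mul_of_nonneg_left hx1 hE0
      nlinarith [p1, p2, p3, p4, p5, p6]
    obtain ⟨n, hn⟩ := exists_nat_ge ((1 + r + 3 * E) / (3 * (-(c + 1 + ρ * s))))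
    refine ⟨(n : ℤ) + 1, 1 / (2 * c), by omega, h2cpos, Or.inr ?_⟩
    intro k hk
    have hx1 : (1 : ℝ) ≤ (k : ℝ) := by exact_mod_cast (by omega : (1:ℤ) ≤ k)
    have hnk : ((n : ℕ) : ℝ) ≤ (k : ℝ) := by exact_mod_cast (by omega : ((n:ℕ):ℤ) ≤ k)
    have hxM : (1 + r + 3 * E) / (3 * (-(c + 1 + ρ * s))) ≤ (k : ℝ) := le_trans hn hnk
    rw [div_le_iff₀ (by linarith)] at hxM
    have raw := rawD (k : ℝ) hx1 (by linarith)
    have hcast : ((k + 1 : ℤ) : ℝ) = (k : ℝ) + 1 := by push_cast; ring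
    rw [hGv k, hGv (k + 1), hcast]
    have hmul := mul_le_mul_of_nonneg_left raw h2cpos.le
    rw [mul_add] at hmul
    linarith [hmul]
  · -- degenerate case: ρ = -1 and s = c + 1
    have hρm : ρ = -1 := by
      rcases hρ with h | h
      · exfalso; rw [h] at ht; nlinarith
      · exact h
    have hsc : s = c + 1 := by rw [hρm] at ht; linarith
    obtain ⟨δ₀, hδ₀pos, hsδ⟩ : ∃ δ₀ : ℝ, 0 < δ₀ ∧ (c + 1) * δ₀ = r * c :=
      ⟨r * c / (c + 1), by positivity, by field_simp⟩
    have rawZ : ∀ x : ℝ, 1 ≤ x → 2 * C2 ≤ r * c * x →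
        ((c + 1) * (x + 1) ^ 3 - r * (x + 1) + ρ * ((x + 1) * W (x + 1))) + δ₀
          ≤ (c + 1) * x ^ 3 - r * x + ρ * (x * W x) := by
      intro x hx1 hcond
      have hx0 : (0:ℝ) ≤ x := by linarith
      have hq1 := hq (x + 1)
      have hq0 := hq x
      rw [hsc] at hq1 hq0
      have hQ1 := abs_le.mp (hQbound (x + 1) (by linarith))
      have hQ0 := abs_le.mp (hQbound x hx1)
      have mq1 : (c + 1) * x * (x + 1) * ((x + 1) * W (x + 1))
          = x * ((c + 1) ^ 2 * (x + 1) ^ 4 + (c - 1) * r * (x + 1) ^ 2 + Q (x + 1)) := by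
        linear_combination x * hq1
      have mq0 : (c + 1) * x * (x + 1) * (x * W x)
          = (x + 1) * ((c + 1) ^ 2 * x ^ 4 + (c - 1) * r * x ^ 2 + Q x) := by
        linear_combination (x + 1) * hq0
      have m1 : x * (-C2) ≤ x * Q (x + 1) := mul_le_mul_of_nonneg_left hQ1.1 hx0
      have m2 : (x + 1) * Q x ≤ (x + 1) * C2 := mul_le_mul_of_nonneg_left hQ0.2 (by linarith)
      have m3 : 0 ≤ (r * c * x - 2 * C2) * x := mul_nonneg (by linarith) hx0
      have mδ : (c + 1) * x * (x + 1) * δ₀ = r * c * x * (x + 1) := by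
        linear_combination x * (x + 1) * hsδ
      have scaled : ((c + 1) * x * (x + 1)) * (((c + 1) * (x + 1) ^ 3 - r * (x + 1)
            + ρ * ((x + 1) * W (x + 1))) + δ₀)
          ≤ ((c + 1) * x * (x + 1)) * ((c + 1) * x ^ 3 - r * x + ρ * (x * W x)) := by
        rw [hρm]
        nlinarith [mq1, mq0, m1, m2, m3, mδ, hcond, hC20, hx1]
      have hfacpos : (0:ℝ) < (c + 1) * x * (x + 1) := by positivity
      exact le_of_mul_le_mul_left scaled hfacpos
    obtain ⟨n, hn⟩ := exists_nat_ge (2 * C2 / (r * c))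
    refine ⟨(n : ℤ) + 1, δ₀ / (2 * c), by omega, by positivity, Or.inr ?_⟩
    intro k hk
    have hx1 : (1 : ℝ) ≤ (k : ℝ) := by exact_mod_cast (by omega : (1:ℤ) ≤ k)
    have hnk : ((n : ℕ) : ℝ) ≤ (k : ℝ) := by exact_mod_cast (by omega : ((n:ℕ):ℤ) ≤ k)
    have hxM : 2 * C2 / (r * c) ≤ (k : ℝ) := le_trans hn hnk
    rw [div_le_iff₀ (by positivity)] at hxM
    have raw := rawZ (k : ℝ) hx1 (by linarith)
    have hcast : ((k + 1 : ℤ) : ℝ) = (k : ℝ) + 1 := by push_cast; ring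
    rw [hGv k, hGv (k + 1), hcast]
    have hmul := mul_le_mul_of_nonneg_left raw h2cpos.le
    rw [mul_add] at hmul
    have hδq : 1 / (2 * c) * δ₀ = δ₀ / (2 * c) := by ring
    linarith [hmul]
  · -- increasing case
    have rawI : ∀ x : ℝ, 1 ≤ x → 1 + r + 3 * E ≤ 3 * (c + 1 + ρ * s) * x →
        ((c + 1) * x ^ 3 - r * x + ρ * (x * W x)) + 1
          ≤ (c + 1) * (x + 1) ^ 3 - r * (x + 1) + ρ * ((x + 1) * W (x + 1)) := by
      intro x hx1 hcond
      obtain ⟨e1lo, e1up⟩ := hρE (x + 1) (by linarith)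
      obtain ⟨e0lo, e0up⟩ := hρE x hx1
      have p1 : (x + 1) * (-E) ≤ (x + 1) * (ρ * (W (x + 1) - s * (x + 1) ^ 2)) :=
        mul_le_mul_of_nonneg_left e1lo (by linarith)
      have p2 : x * (ρ * (W x - s * x ^ 2)) ≤ x * E :=
        mul_le_mul_of_nonneg_left e0up (by linarith)
      have p3 : 0 ≤ (c + 1 + ρ * s) * (3 * x + 1) := mul_nonneg ht.le (by linarith)
      have p4 : (1 + r + 3 * E) * x ≤ (3 * (c + 1 + ρ * s) * x) * x :=
        mul_le_mul_of_nonneg_right hcond (by linarith)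
      have p5 : r * 1 ≤ r * x := mul_le_mul_of_nonneg_left hx1 hr.le
      have p6 : E * 1 ≤ E * x := mul_le_mul_of_nonneg_left hx1 hE0
      nlinarith [p1, p2, p3, p4, p5, p6]
    obtain ⟨n, hn⟩ := exists_nat_ge ((1 + r + 3 * E) / (3 * (c + 1 + ρ * s)))
    refine ⟨(n : ℤ) + 1, 1 / (2 * c), by omega, h2cpos, Or.inl ?_⟩
    intro k hk
    have hx1 : (1 : ℝ) ≤ (k : ℝ) := by exact_mod_cast (by omega : (1:ℤ) ≤ k)
    have hnk : ((n : ℕ) : ℝ) ≤ (k : ℝ) := by exact_mod_cast (by omega : ((n:ℕ):ℤ) ≤ k)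
    have hxM : (1 + r + 3 * E) / (3 * (c + 1 + ρ * s)) ≤ (k : ℝ) := le_trans hn hnk
    rw [div_le_iff₀ (by linarith)] at hxM
    have raw := rawI (k : ℝ) hx1 (by linarith)
    have hcast : ((k + 1 : ℤ) : ℝ) = (k : ℝ) + 1 := by push_cast; ring
    rw [hGv k, hGv (k + 1), hcast]
    have hmul := mul_le_mul_of_nonneg_left raw h2cpos.le
    rw [mul_add] at hmul
    linarith [hmul]

lemma omegaG_one (a c d r : ℝ) : omegaG a c d r 1 = omegaP a c d r := by
  funext k
  rw [omegaG, omegaP]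
  ring

lemma omegaG_negone (a c d r : ℝ) : omegaG a c d r (-1) = omegaM a c d r := by
  funext k
  rw [omegaG, omegaM]
  ring

lemma omegaG_odd (a c d r ρ : ℝ) (k : ℤ) :
    omegaG a c d r ρ (-k) = - omegaG a c d r ρ k := by
  rw [omegaG, omegaG]
  push_cast
  rw [show 4 * a * c * d * (-(k:ℝ)) ^ 4 + ((c - 1) * (-(k:ℝ)) ^ 2 + r) ^ 2
      = 4 * a * c * d * (k:ℝ) ^ 4 + ((c - 1) * (k:ℝ) ^ 2 + r) ^ 2 from by ring]
  ring

lemma family_sep (g : ℤ → ℝ) (hinj : Function.Injective g)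
    (hodd : ∀ k : ℤ, g (-k) = - g k)
    (K : ℤ) (hK1 : 1 ≤ K) (δ : ℝ) (hδ : 0 < δ)
    (hgap : (∀ k : ℤ, K ≤ k → g k + δ ≤ g (k + 1)) ∨
            (∀ k : ℤ, K ≤ k → g (k + 1) + δ ≤ g k)) :
    ∃ δ' : ℝ, 0 < δ' ∧ ∀ k n : ℤ, k ≠ n → δ' ≤ |g k - g n| := by
  rcases hgap with h | h
  · exact sep_lemma g hinj hodd K hK1 δ hδ h
  · obtain ⟨δ', hδ', hsep⟩ := sep_lemma (fun k => - g k)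
      (fun k n hkn => hinj (neg_injective hkn))
      (fun k => by simp [hodd k])
      K hK1 δ hδ (fun k hk => by have := h k hk; show -g k + δ ≤ -g (k + 1); linarith)
    refine ⟨δ', hδ', fun k n hkn => ?_⟩
    have h2 := hsep k n hkn
    have h3 : (-g k) - (-g n) = -(g k - g n) := by ring
    rwa [h3, abs_neg] at h2

/-- Lemma 6.1 (iii): if the exponents satisfy `ω_k^+ ≠ ω_n^+`, `ω_k^- ≠ ω_n^-`
for `k ≠ n` and `ω_k^+ ≠ ω_n^-` except for `k = n = 0`, then for some
sufficiently small `ε > 0` the set `Ω = {ω_k^± : k ∈ ℤ}` contains no three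
pairwise distinct elements `x < y < z` with `y − x < ε` and `z − y < ε`: every
`ε`-chain in `Ω` has at most two elements. -/
theorem chains_have_at_most_two_elements (a c d r : ℝ) (ha : 0 < a) (hc : 0 < c)
    (hd : 0 < d) (hr : 0 < r)
    (hP : ∀ k n : ℤ, k ≠ n → omegaP a c d r k ≠ omegaP a c d r n)
    (hM : ∀ k n : ℤ, k ≠ n → omegaM a c d r k ≠ omegaM a c d r n)
    (hPM : ∀ k n : ℤ, ¬(k = 0 ∧ n = 0) → omegaP a c d r k ≠ omegaM a c d r n) :
    ∃ ε : ℝ, 0 < ε ∧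
      ∀ x y z : ℝ,
        x ∈ Set.range (omegaP a c d r) ∪ Set.range (omegaM a c d r) →
        y ∈ Set.range (omegaP a c d r) ∪ Set.range (omegaM a c d r) →
        z ∈ Set.range (omegaP a c d r) ∪ Set.range (omegaM a c d r) →
        x < y → y < z → y - x < ε → ¬(z - y < ε) := by
  -- separation for the plus family
  obtain ⟨KP, δP0, hKP1, hδP0, hgapP⟩ := omegaG_gap a c d r ha hc hd hr 1 (Or.inl rfl)
  rw [omegaG_one] at hgapP
  obtain ⟨δP, hδP, hsepP⟩ := family_sep (omegaP a c d r)
    (fun k n hkn => by_contra fun hne => hP k n hne hkn)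
    (fun k => by rw [← omegaG_one a c d r, omegaG_odd])
    KP hKP1 δP0 hδP0 hgapP
  -- separation for the minus family
  obtain ⟨KM, δM0, hKM1, hδM0, hgapM⟩ := omegaG_gap a c d r ha hc hd hr (-1) (Or.inr rfl)
  rw [omegaG_negone] at hgapM
  obtain ⟨δM, hδM, hsepM⟩ := family_sep (omegaM a c d r)
    (fun k n hkn => by_contra fun hne => hM k n hne hkn)
    (fun k => by rw [← omegaG_negone a c d r, omegaG_odd])
    KM hKM1 δM0 hδM0 hgapM
  refine ⟨min δP δM / 2, by positivity, ?_⟩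
  intro x y z hx hy hz hxy hyz h1 h2
  have dxy : |x - y| < min δP δM := by
    rw [abs_sub_comm, abs_of_nonneg (by linarith)]
    linarith [min_le_left δP δM, min_le_right δP δM]
  have dyz : |y - z| < min δP δM := by
    rw [abs_sub_comm, abs_of_nonneg (by linarith)]
    linarith [min_le_left δP δM, min_le_right δP δM]
  have dxz : |x - z| < min δP δM := by
    rw [abs_sub_comm, abs_of_nonneg (by linarith)]
    linarith
  have contraP : ∀ u v : ℝ, u ∈ Set.range (omegaP a c d r) →
      v ∈ Set.range (omegaP a c d r) → u ≠ v → |u - v| < min δP δM → False := by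
    rintro u v ⟨ku, rfl⟩ ⟨kv, rfl⟩ hne hlt
    have hkne : ku ≠ kv := fun h => hne (by rw [h])
    have := hsepP ku kv hkne
    have := min_le_left δP δM
    linarith
  have contraM : ∀ u v : ℝ, u ∈ Set.range (omegaM a c d r) →
      v ∈ Set.range (omegaM a c d r) → u ≠ v → |u - v| < min δP δM → False := by
    rintro u v ⟨ku, rfl⟩ ⟨kv, rfl⟩ hne hlt
    have hkne : ku ≠ kv := fun h => hne (by rw [h])
    have := hsepM ku kv hkne
    have := min_le_right δP δM
    linarith
  rcases hx with hx | hx <;> rcases hy with hy | hy <;> rcases hz with hz | hz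
  · exact contraP x y hx hy (ne_of_lt hxy) dxy
  · exact contraP x y hx hy (ne_of_lt hxy) dxy
  · exact contraP x z hx hz (ne_of_lt (hxy.trans hyz)) dxz
  · exact contraM y z hy hz (ne_of_lt hyz) dyz
  · exact contraP y z hy hz (ne_of_lt hyz) dyz
  · exact contraM x z hx hz (ne_of_lt (hxy.trans hyz)) dxz
  · exact contraM x y hx hy (ne_of_lt hxy) dxy
  · exact contraM x y hx hy (ne_of_lt hxy) dxy
end
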